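/- Let φ and ψ be unit vectors in ℂ² that are linearly independent and satisfy ⟨ψ, φ⟩ ≠ 0. For ε ∈ {+1, −1}, set s = ε/|⟨φ, ψ⟩| and define H^ε := ((1−s)/2)·I + (s/2)·(|φ⟩⟨φ| + |ψ⟩⟨ψ|), where I is the 2×2 identity matrix. Then H^ε is a rank-one orthogonal projection (H^ε is Hermitian, (H^ε)² = H^ε, and Tr(H^ε) = 1), and its weak value is W_{φ,ψ}(H^ε) = (1/2)(1 + ε/|⟨φ, ψ⟩|). -/

import Mathlib

noncomputable section

/-- The rank-one projector `|v⟩⟨v|` with entries `v i * conj (v j)`. -/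
def proj (v : EuclideanSpace ℂ (Fin 2)) : Matrix (Fin 2) (Fin 2) ℂ :=
  Matrix.of fun i j => v i * star (v j)

/-- Matrix-vector multiplication, valued in `EuclideanSpace ℂ (Fin 2)`. -/
def mulVecE (M : Matrix (Fin 2) (Fin 2) ℂ) (v : EuclideanSpace ℂ (Fin 2)) :
    EuclideanSpace ℂ (Fin 2) :=
  (WithLp.equiv 2 (Fin 2 → ℂ)).symm (M.mulVec ((WithLp.equiv 2 (Fin 2 → ℂ)) v))

/-- The weak value `W_{φ,ψ}(M) = ⟨ψ, Mφ⟩ / ⟨ψ, φ⟩`. -/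
def weak (φ ψ : EuclideanSpace ℂ (Fin 2)) (M : Matrix (Fin 2) (Fin 2) ℂ) : ℂ :=
  (inner ℂ ψ (mulVecE M φ) : ℂ) / (inner ℂ ψ φ : ℂ)

/-!
In dimension two Cayley–Hamilton gives `P² = 2P - (1 - |⟨φ,ψ⟩|²) I` for `P = |φ⟩⟨φ| + |ψ⟩⟨ψ|`
(trace `2`, determinant the Gram determinant `1 - |⟨φ,ψ⟩|²`). Hence `H = ((1-s)/2) I + (s/2) P`
is idempotent when `s² |⟨φ,ψ⟩|² = 1`, which is the choice `s = ±1/|⟨φ,ψ⟩|`.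
Since `Pφ = φ + ⟨ψ,φ⟩ψ`, the weak value of `P` is `2`, so that of `H` is `(1-s)/2 + s = (1+s)/2`.
-/

open Matrix

theorem Matrix.mul_self_eq_trace_smul_sub_det_smul_fin_two {R : Type*} [CommRing R] [Nontrivial R]
    (A : Matrix (Fin 2) (Fin 2) R) : A * A = A.trace • A - A.det • 1 := by
  have h := A.aeval_self_charpoly
  simp only [charpoly_fin_two, map_add, map_sub, map_mul, Polynomial.aeval_X_pow,
    Polynomial.aeval_X, Polynomial.aeval_C, Algebra.algebraMap_eq_smul_one, smul_mul_assoc,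
    one_mul] at h
  rw [← sq]
  linear_combination (norm := module) h

theorem isIdempotentElem_smul_one_add_smul {𝕜 A : Type*} [Field 𝕜] [CharZero 𝕜] [Ring A]
    [Algebra 𝕜 A] {P : A} {s t : 𝕜} (hP : P * P = (2 : 𝕜) • P - (1 - t) • 1)
    (hst : s ^ 2 * t = 1) :
    IsIdempotentElem (((1 - s) / 2) • (1 : A) + (s / 2) • P) := by
  unfold IsIdempotentElem
  simp only [add_mul, mul_add, smul_mul_smul, one_mul, mul_one, hP]
  linear_combination (norm := module) (1 / 4 : 𝕜) • hst • (1 : A)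

section Projectors

variable {φ ψ : EuclideanSpace ℂ (Fin 2)}

lemma proj_eq_vecMulVec (v : EuclideanSpace ℂ (Fin 2)) :
    proj v = vecMulVec (WithLp.ofLp v) (star (WithLp.ofLp v)) := rfl

lemma proj_isHermitian (v : EuclideanSpace ℂ (Fin 2)) : (proj v).IsHermitian := by
  rw [proj_eq_vecMulVec, IsHermitian, conjTranspose_vecMulVec, star_star]

lemma trace_proj (v : EuclideanSpace ℂ (Fin 2)) : (proj v).trace = inner ℂ v v := by
  rw [proj_eq_vecMulVec, trace_vecMulVec, EuclideanSpace.inner_eq_star_dotProduct]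

lemma det_proj_add_proj (φ ψ : EuclideanSpace ℂ (Fin 2)) :
    (proj φ + proj ψ).det = inner ℂ φ φ * inner ℂ ψ ψ - inner ℂ φ ψ * inner ℂ ψ φ := by
  simp only [det_fin_two, EuclideanSpace.inner_eq_star_dotProduct, dotProduct, Fin.sum_univ_two,
    Matrix.add_apply, proj, of_apply, Pi.star_apply]
  ring

lemma trace_proj_add_proj (hφ : ‖φ‖ = 1) (hψ : ‖ψ‖ = 1) : (proj φ + proj ψ).trace = 2 := by
  rw [trace_add, trace_proj, trace_proj, inner_self_eq_one_of_norm_eq_one hφ,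
    inner_self_eq_one_of_norm_eq_one hψ]
  norm_num

lemma proj_add_proj_mul_self (hφ : ‖φ‖ = 1) (hψ : ‖ψ‖ = 1) :
    (proj φ + proj ψ) * (proj φ + proj ψ) =
      (2 : ℝ) • (proj φ + proj ψ) - (1 - ‖(inner ℂ φ ψ : ℂ)‖ ^ 2 : ℝ) • 1 := by
  have hgram : inner ℂ φ ψ * inner ℂ ψ φ = (‖(inner ℂ φ ψ : ℂ)‖ : ℂ) ^ 2 := by
    rw [← inner_conj_symm φ ψ, Complex.conj_mul', Complex.norm_conj]
  rw [mul_self_eq_trace_smul_sub_det_smul_fin_two, trace_proj_add_proj hφ hψ, det_proj_add_proj,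
    inner_self_eq_one_of_norm_eq_one hφ, inner_self_eq_one_of_norm_eq_one hψ, one_mul, hgram,
    ← Complex.coe_smul, ← Complex.coe_smul]
  push_cast
  rfl

end Projectors

section WeakValue

variable {φ ψ : EuclideanSpace ℂ (Fin 2)}

lemma mulVecE_eq (M : Matrix (Fin 2) (Fin 2) ℂ) (v : EuclideanSpace ℂ (Fin 2)) :
    mulVecE M v = WithLp.toLp 2 (M *ᵥ WithLp.ofLp v) := rfl

lemma mulVecE_add (A B : Matrix (Fin 2) (Fin 2) ℂ) (v : EuclideanSpace ℂ (Fin 2)) :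
    mulVecE (A + B) v = mulVecE A v + mulVecE B v := by
  simp only [mulVecE_eq, add_mulVec, WithLp.toLp_add]

lemma mulVecE_smul (c : ℂ) (A : Matrix (Fin 2) (Fin 2) ℂ) (v : EuclideanSpace ℂ (Fin 2)) :
    mulVecE (c • A) v = c • mulVecE A v := by
  simp only [mulVecE_eq, smul_mulVec, WithLp.toLp_smul]

lemma mulVecE_one (v : EuclideanSpace ℂ (Fin 2)) : mulVecE 1 v = v := by
  simp only [mulVecE_eq, one_mulVec, WithLp.toLp_ofLp]

lemma mulVecE_proj (v w : EuclideanSpace ℂ (Fin 2)) :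
    mulVecE (proj v) w = inner ℂ v w • v := by
  rw [mulVecE_eq, proj_eq_vecMulVec, vecMulVec_mulVec, op_smul_eq_smul, WithLp.toLp_smul,
    WithLp.toLp_ofLp, EuclideanSpace.inner_eq_star_dotProduct, dotProduct_comm]

lemma weak_add (A B : Matrix (Fin 2) (Fin 2) ℂ) : weak φ ψ (A + B) = weak φ ψ A + weak φ ψ B := by
  simp only [weak, mulVecE_add, inner_add_right, add_div]

lemma weak_smul (c : ℂ) (A : Matrix (Fin 2) (Fin 2) ℂ) : weak φ ψ (c • A) = c * weak φ ψ A := by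
  simp only [weak, mulVecE_smul, inner_smul_right, mul_div_assoc]

lemma weak_one (h : inner ℂ ψ φ ≠ 0) : weak φ ψ 1 = 1 := by
  rw [weak, mulVecE_one, div_self h]

lemma weak_proj_left (h : inner ℂ ψ φ ≠ 0) : weak φ ψ (proj φ) = inner ℂ φ φ := by
  rw [weak, mulVecE_proj, inner_smul_right, mul_div_cancel_right₀ _ h]

lemma weak_proj_right (h : inner ℂ ψ φ ≠ 0) : weak φ ψ (proj ψ) = inner ℂ ψ ψ := by
  rw [weak, mulVecE_proj, inner_smul_right, mul_div_cancel_left₀ _ h]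

lemma weak_proj_add_proj (hφ : ‖φ‖ = 1) (hψ : ‖ψ‖ = 1) (h : inner ℂ ψ φ ≠ 0) :
    weak φ ψ (proj φ + proj ψ) = 2 := by
  rw [weak_add, weak_proj_left h, weak_proj_right h, inner_self_eq_one_of_norm_eq_one hφ,
    inner_self_eq_one_of_norm_eq_one hψ]
  norm_num

end WeakValue

theorem stmt8_general (φ ψ : EuclideanSpace ℂ (Fin 2))
    (hφ : ‖φ‖ = 1) (hψ : ‖ψ‖ = 1)
    (hno : (inner ℂ ψ φ : ℂ) ≠ 0)
    (ε : ℝ) (hε : ε = 1 ∨ ε = -1)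
    (s : ℝ) (hs : s = ε / ‖(inner ℂ φ ψ : ℂ)‖)
    (H : Matrix (Fin 2) (Fin 2) ℂ)
    (hH : H = (((1 - s) / 2 : ℝ) : ℂ) • (1 : Matrix (Fin 2) (Fin 2) ℂ)
        + ((s / 2 : ℝ) : ℂ) • (proj φ + proj ψ)) :
    H.IsHermitian ∧ H * H = H ∧ H.trace = 1 ∧
      weak φ ψ H = (1 / 2) * (1 + (ε : ℂ) / (‖(inner ℂ φ ψ : ℂ)‖ : ℂ)) := by
  have hc : ‖(inner ℂ φ ψ : ℂ)‖ ≠ 0 := norm_ne_zero_iff.mpr (inner_eq_zero_symm.not.mpr hno)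
  have hst : s ^ 2 * ‖(inner ℂ φ ψ : ℂ)‖ ^ 2 = 1 := by
    rw [← mul_pow, hs, div_mul_cancel₀ _ hc]
    rcases hε with rfl | rfl <;> norm_num
  have hHr : H = ((1 - s) / 2) • (1 : Matrix (Fin 2) (Fin 2) ℂ) + (s / 2) • (proj φ + proj ψ) := by
    simpa only [Complex.coe_smul] using hH
  refine ⟨?_, ?_, ?_, ?_⟩
  · rw [hHr]
    exact (isHermitian_one.smul (.all _)).add
      (((proj_isHermitian φ).add (proj_isHermitian ψ)).smul (.all _))
  · rw [hHr]
    exact isIdempotentElem_smul_one_add_smul (proj_add_proj_mul_self hφ hψ) hst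
  · rw [hHr, trace_add, trace_smul, trace_smul, trace_one, Fintype.card_fin, trace_proj_add_proj hφ hψ,
      Complex.real_smul, Complex.real_smul]
    push_cast
    ring
  · rw [hH, weak_add, weak_smul, weak_smul, weak_one hno, weak_proj_add_proj hφ hψ hno, hs]
    push_cast
    ring

/-- the operators `H^± = ((1∓1/|⟨φ,ψ⟩|)/2) I + (±1/(2|⟨φ,ψ⟩|))(|φ⟩⟨φ| + |ψ⟩⟨ψ|)`
are rank-one orthogonal projections with weak value `(1/2)(1 ± 1/|⟨φ,ψ⟩|)`. -/
theorem stmt8 (φ ψ : EuclideanSpace ℂ (Fin 2))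
    (hφ : ‖φ‖ = 1) (hψ : ‖ψ‖ = 1)
    (hind : LinearIndependent ℂ ![φ, ψ])
    (hno : (inner ℂ ψ φ : ℂ) ≠ 0)
    (ε : ℝ) (hε : ε = 1 ∨ ε = -1)
    (s : ℝ) (hs : s = ε / ‖(inner ℂ φ ψ : ℂ)‖)
    (H : Matrix (Fin 2) (Fin 2) ℂ)
    (hH : H = (((1 - s) / 2 : ℝ) : ℂ) • (1 : Matrix (Fin 2) (Fin 2) ℂ)
        + ((s / 2 : ℝ) : ℂ) • (proj φ + proj ψ)) :
    H.IsHermitian ∧ H * H = H ∧ H.trace = 1 ∧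
      weak φ ψ H = (1 / 2) * (1 + (ε : ℂ) / (‖(inner ℂ φ ψ : ℂ)‖ : ℂ)) :=
  stmt8_general φ ψ hφ hψ hno ε hε s hs H hH
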